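/- arXiv:math/0606081 — 3 statements merged into one kernel-verified Lean document; each statement's English description precedes it below -/
import Mathlib

section
/- Let ρ : [t₀,t₁] → ℝ be measurable and nonnegative, γ : [t₀,t₁] → ℝ nonnegative and locally integrable, and μ : [0,∞) → [0,∞) continuous and nondecreasing with μ(0)=0. Suppose ρ(t) ≤ ∫_{t₀}^t γ(τ) μ(ρ(τ)) dτ for all t ∈ [t₀,t₁]. If ∫_0^1 dr/μ(r) = +∞, then ρ ≡ 0 on [t₀,t₁]. -/
open MeasureTheory Set

/-! The primitive `M s = ∫_{t₀}^s γ μ(ρ)` dominates `ρ`, is continuous and nondecreasing, and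
satisfies `M y - M x ≤ (∫_x^y γ) μ(M y)` for `x ≤ y`. If `M t = c > 0`, pick times `s n` with
`M (s n) = c / 2^n`, and let `D n = ∫_{s (n+1)}^{s n} γ`, so that `c / 2^(n+1) ≤ D n μ(c / 2^n)`.
Since `μ` is nondecreasing,
`∫_{c/2^(n+1)}^{c/2^n} dr / μ r ≤ (c / 2^(n+1)) / μ(c / 2^(n+1)) ≤ 2 D (n+1)`, and summing over `n` bounds `∫_0^c dr / μ r` by `2 ∫ γ < ∞`, contradicting the Osgood condition. -/

theorem Set.Ioc_subset_iUnion_Ioc_succ {α : Type*} [LinearOrder α] {b : ℕ → α} {a : α}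
    (h : ∀ x, a < x → ∃ n, b n < x) : Ioc a (b 0) ⊆ ⋃ n, Ioc (b (n + 1)) (b n) := by
  classical
  intro x hx
  have hex := h x hx.1
  obtain ⟨k, hk⟩ := Nat.exists_eq_add_one_of_ne_zero fun h0 : Nat.find hex = 0 =>
    (Nat.find_spec hex).not_ge (h0 ▸ hx.2)
  refine mem_iUnion.2 ⟨k, hk ▸ Nat.find_spec hex, not_lt.1 (Nat.find_min hex ?_)⟩
  omega

section InverseIntegral

variable {μ : ℝ → ℝ}

theorem setLIntegral_ofReal_inv_Ioc_le {u v : ℝ} (hu : 0 < μ u) (hμ : MonotoneOn μ (Ici u)) :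
    ∫⁻ r in Ioc u v, ENNReal.ofReal (μ r)⁻¹ ≤ ENNReal.ofReal ((v - u) / μ u) := by
  have hbound : ∀ r ∈ Ioc u v, ENNReal.ofReal (μ r)⁻¹ ≤ ENNReal.ofReal (μ u)⁻¹ := fun r hr =>
    ENNReal.ofReal_le_ofReal (inv_anti₀ hu (hμ self_mem_Ici hr.1.le hr.1.le))
  calc ∫⁻ r in Ioc u v, ENNReal.ofReal (μ r)⁻¹
      ≤ ∫⁻ _ in Ioc u v, ENNReal.ofReal (μ u)⁻¹ := setLIntegral_mono' measurableSet_Ioc hbound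
    _ = ENNReal.ofReal ((v - u) / μ u) := by
      rw [setLIntegral_const, Real.volume_Ioc, ← ENNReal.ofReal_mul (inv_nonneg.2 hu.le),
        div_eq_inv_mul]

theorem setLIntegral_ofReal_inv_Ioo_zero_one_le {c : ℝ} (hμc : 0 < μ c)
    (hμ : MonotoneOn μ (Ici c)) :
    ∫⁻ r in Ioo 0 1, ENNReal.ofReal (μ r)⁻¹ ≤
      (∫⁻ r in Ioc 0 c, ENNReal.ofReal (μ r)⁻¹) + ENNReal.ofReal ((1 - c) / μ c) := by
  have hcover : Ioo (0 : ℝ) 1 ⊆ Ioc 0 c ∪ Ioc c 1 := fun r hr =>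
    (le_or_gt r c).imp (fun h => ⟨hr.1, h⟩) fun h => ⟨h, hr.2.le⟩
  calc ∫⁻ r in Ioo 0 1, ENNReal.ofReal (μ r)⁻¹
      ≤ ∫⁻ r in Ioc 0 c ∪ Ioc c 1, ENNReal.ofReal (μ r)⁻¹ := lintegral_mono_set hcover
    _ ≤ _ := (lintegral_union_le _ _ _).trans
      (add_le_add le_rfl (setLIntegral_ofReal_inv_Ioc_le hμc hμ))

theorem setLIntegral_ofReal_inv_Ioc_zero_le {D : ℕ → ℝ} {c A : ℝ} (hc : 0 < c)
    (hμ : MonotoneOn μ (Ioi 0)) (hD_nonneg : ∀ n, 0 ≤ D n)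
    (hD : ∀ n, c / 2 ^ (n + 1) ≤ D n * μ (c / 2 ^ n))
    (hA : ∀ N, ∑ n ∈ Finset.range N, D n ≤ A) :
    ∫⁻ r in Ioc 0 c, ENNReal.ofReal (μ r)⁻¹ ≤ ENNReal.ofReal (2 * A) := by
  set b : ℕ → ℝ := fun n => c / 2 ^ n with hb
  have hb_pos : ∀ n, 0 < b n := fun n => by positivity
  have hcover : Ioc 0 (b 0) ⊆ ⋃ n, Ioc (b (n + 1)) (b n) := by
    refine Set.Ioc_subset_iUnion_Ioc_succ fun r hr => ?_
    obtain ⟨n, hn⟩ := exists_pow_lt_of_lt_one (div_pos hr hc) (by norm_num : (1 / 2 : ℝ) < 1)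
    refine ⟨n, ?_⟩
    rw [lt_div_iff₀ hc] at hn
    simpa [hb, div_eq_mul_inv, mul_comm] using hn
  rw [show b 0 = c by simp [hb]] at hcover
  have hstep : ∀ n, ∫⁻ r in Ioc (b (n + 1)) (b n), ENNReal.ofReal (μ r)⁻¹ ≤
      ENNReal.ofReal (2 * D (n + 1)) := by
    intro n
    have hμb : 0 < μ (b (n + 1)) :=
      pos_of_mul_pos_right ((hb_pos (n + 2)).trans_le (hD (n + 1))) (hD_nonneg _)
    refine (setLIntegral_ofReal_inv_Ioc_le hμb (hμ.mono (Ici_subset_Ioi.2 (hb_pos _)))).trans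
      (ENNReal.ofReal_le_ofReal ?_)
    have hhalf : b n - b (n + 1) = 2 * b (n + 2) := by simp only [hb]; ring
    rw [div_le_iff₀ hμb, hhalf]
    linarith [hD (n + 1)]
  calc ∫⁻ r in Ioc 0 c, ENNReal.ofReal (μ r)⁻¹
      ≤ ∫⁻ r in ⋃ n, Ioc (b (n + 1)) (b n), ENNReal.ofReal (μ r)⁻¹ := lintegral_mono_set hcover
    _ ≤ ∑' n, ∫⁻ r in Ioc (b (n + 1)) (b n), ENNReal.ofReal (μ r)⁻¹ := lintegral_iUnion_le _ _
    _ ≤ ∑' n, ENNReal.ofReal (2 * D (n + 1)) := ENNReal.tsum_le_tsum hstep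
    _ ≤ ENNReal.ofReal (2 * A) := ENNReal.tsum_le_of_sum_range_le fun N => by
      rw [← ENNReal.ofReal_sum_of_nonneg fun n _ => mul_nonneg zero_le_two (hD_nonneg _),
        ← Finset.mul_sum]
      have := hA (N + 1)
      rw [Finset.sum_range_succ'] at this
      exact ENNReal.ofReal_le_ofReal (by linarith [hD_nonneg 0])

end InverseIntegral

theorem eq_zero_of_sub_le_mul_of_lintegral_eq_top {M Γ μ : ℝ → ℝ} {a b : ℝ} (hab : a ≤ b)
    (hM_cont : ContinuousOn M (Icc a b)) (hM_mono : MonotoneOn M (Icc a b)) (hMa : M a = 0)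
    (hΓ : MonotoneOn Γ (Icc a b)) (hμ : MonotoneOn μ (Ioi 0))
    (hsub : ∀ x ∈ Icc a b, ∀ y ∈ Icc a b, x ≤ y → M y - M x ≤ (Γ y - Γ x) * μ (M y))
    (hosgood : ∫⁻ r in Ioo 0 1, ENNReal.ofReal (μ r)⁻¹ = ⊤) : M b = 0 := by
  have ha : a ∈ Icc a b := left_mem_Icc.2 hab
  have hb : b ∈ Icc a b := right_mem_Icc.2 hab
  refine le_antisymm (not_lt.1 fun hc => ?_) (hMa ▸ hM_mono ha hb hab)
  set c := M b
  have hlevel : ∀ n : ℕ, ∃ s ∈ Icc a b, M s = c / 2 ^ n := fun n =>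
    intermediate_value_Icc hab hM_cont
      ⟨hMa ▸ by positivity, div_le_self hc.le (one_le_pow₀ one_le_two)⟩
  choose s hs hMs using hlevel
  have hs_succ : ∀ n, s (n + 1) ≤ s n := fun n => by
    by_contra! h
    have hle := hM_mono (hs n) (hs (n + 1)) h.le
    rw [hMs, hMs] at hle
    exact hle.not_gt (div_lt_div_of_pos_left hc (by positivity)
      (pow_lt_pow_right₀ one_lt_two n.lt_succ_self))
  set D : ℕ → ℝ := fun n => Γ (s n) - Γ (s (n + 1))
  have hD_nonneg : ∀ n, 0 ≤ D n := fun n => sub_nonneg.2 (hΓ (hs _) (hs _) (hs_succ n))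
  have hD : ∀ n, c / 2 ^ (n + 1) ≤ D n * μ (c / 2 ^ n) := fun n => by
    have h := hsub _ (hs (n + 1)) _ (hs n) (hs_succ n)
    rwa [hMs, hMs, show c / 2 ^ n - c / 2 ^ (n + 1) = c / 2 ^ (n + 1) by ring] at h
  have hA : ∀ N, ∑ n ∈ Finset.range N, D n ≤ Γ b - Γ a := fun N => by
    rw [Finset.sum_range_sub' (fun n => Γ (s n))]
    linarith [hΓ (hs 0) hb (hs 0).2, hΓ ha (hs N) (hs N).1]
  have hμc : 0 < μ c :=
    pos_of_mul_pos_right ((by positivity : 0 < c / 2 ^ (0 + 1)).trans_le (by simpa using hD 0))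
      (hD_nonneg 0)
  refine (hosgood ▸ setLIntegral_ofReal_inv_Ioo_zero_one_le hμc
    (hμ.mono (Ici_subset_Ioi.2 hc))).not_gt ?_
  exact ENNReal.add_lt_top.2 ⟨(setLIntegral_ofReal_inv_Ioc_zero_le hc hμ hD_nonneg hD hA).trans_lt
    ENNReal.ofReal_lt_top, ENNReal.ofReal_lt_top⟩

section Primitive

variable {f γ : ℝ → ℝ} {a b : ℝ}

theorem IntervalIntegrable.mono_Icc (hf : IntervalIntegrable f volume a b) {x y : ℝ}
    (hx : x ∈ Icc a b) (hy : y ∈ Icc a b) : IntervalIntegrable f volume x y :=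
  hf.mono_set (uIcc_subset_uIcc (Icc_subset_uIcc hx) (Icc_subset_uIcc hy))

theorem monotoneOn_primitive_of_nonneg (hf : IntervalIntegrable f volume a b)
    (h : ∀ τ ∈ Icc a b, 0 ≤ f τ) : MonotoneOn (fun s => ∫ τ in a..s, f τ) (Icc a b) :=
  fun _ hx _ hy hxy => intervalIntegral.integral_mono_interval le_rfl hx.1 hxy
    ((ae_restrict_mem measurableSet_Ioc).mono fun τ hτ => h τ ⟨hτ.1.le, hτ.2.trans hy.2⟩)
    (hf.mono_Icc (left_mem_Icc.2 (hx.1.trans hx.2)) hy)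

theorem primitive_sub_le_mul_of_le (hf : IntervalIntegrable f volume a b)
    (hγ : IntervalIntegrable γ volume a b) {x y K : ℝ} (hx : x ∈ Icc a b) (hy : y ∈ Icc a b)
    (hxy : x ≤ y) (h : ∀ τ ∈ Icc x y, f τ ≤ γ τ * K) :
    (∫ τ in a..y, f τ) - (∫ τ in a..x, f τ) ≤ ((∫ τ in a..y, γ τ) - ∫ τ in a..x, γ τ) * K := by
  have ha : a ∈ Icc a b := left_mem_Icc.2 (hx.1.trans hx.2)
  rw [intervalIntegral.integral_interval_sub_left (hf.mono_Icc ha hy) (hf.mono_Icc ha hx),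
    intervalIntegral.integral_interval_sub_left (hγ.mono_Icc ha hy) (hγ.mono_Icc ha hx),
    ← intervalIntegral.integral_mul_const]
  exact intervalIntegral.integral_mono_on hxy (hf.mono_Icc hx hy)
    ((hγ.mono_Icc hx hy).mul_const K) h

end Primitive

theorem osgood_lemma_zero_general (t₀ t₁ : ℝ) (ρ γ μ : ℝ → ℝ)
    (hρ_nonneg : ∀ t ∈ Icc t₀ t₁, 0 ≤ ρ t)
    (hγ_nonneg : ∀ t ∈ Icc t₀ t₁, 0 ≤ γ t)
    (hγ_int : IntegrableOn γ (Icc t₀ t₁))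
    (hμ_mono : MonotoneOn μ (Ici 0))
    (hμ_nonneg : ∀ x, 0 ≤ x → 0 ≤ μ x)
    (hbound : ∀ t ∈ Icc t₀ t₁, ρ t ≤ ∫ τ in t₀..t, γ τ * μ (ρ τ))
    (hosgood : ∫⁻ r in Ioo (0:ℝ) 1, ENNReal.ofReal (μ r)⁻¹ = ⊤) :
    ∀ t ∈ Icc t₀ t₁, ρ t = 0 := by
  intro t ht
  refine le_antisymm ?_ (hρ_nonneg t ht)
  set M : ℝ → ℝ := fun s => ∫ τ in t₀..s, γ τ * μ (ρ τ)
  set Γ : ℝ → ℝ := fun s => ∫ τ in t₀..s, γ τ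
  -- an undefined integral is `0`, so then `hbound` alone gives `ρ t ≤ 0`
  by_cases hfi : IntervalIntegrable (fun τ => γ τ * μ (ρ τ)) volume t₀ t
  swap
  · simpa [M, intervalIntegral.integral_undef hfi] using hbound t ht
  have hsub : Icc t₀ t ⊆ Icc t₀ t₁ := Icc_subset_Icc_right ht.2
  have hγi : IntervalIntegrable γ volume t₀ t :=
    (hγ_int.mono_set (uIcc_of_le ht.1 ▸ hsub)).intervalIntegrable
  have hρM : ∀ τ ∈ Icc t₀ t, ρ τ ≤ M τ := fun τ hτ => hbound τ (hsub hτ)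
  have hM_mono : MonotoneOn M (Icc t₀ t) := monotoneOn_primitive_of_nonneg hfi fun τ hτ =>
    mul_nonneg (hγ_nonneg τ (hsub hτ)) (hμ_nonneg _ (hρ_nonneg τ (hsub hτ)))
  have hΓ_mono : MonotoneOn Γ (Icc t₀ t) :=
    monotoneOn_primitive_of_nonneg hγi fun τ hτ => hγ_nonneg τ (hsub hτ)
  have hM_sub : ∀ x ∈ Icc t₀ t, ∀ y ∈ Icc t₀ t, x ≤ y → M y - M x ≤ (Γ y - Γ x) * μ (M y) :=
    fun x hx y hy hxy => primitive_sub_le_mul_of_le hfi hγi hx hy hxy fun τ hτ => by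
      have hτ' : τ ∈ Icc t₀ t := ⟨hx.1.trans hτ.1, hτ.2.trans hy.2⟩
      have hρ_le : ρ τ ≤ M y := (hρM τ hτ').trans (hM_mono hτ' hy hτ.2)
      exact mul_le_mul_of_nonneg_left (hμ_mono (hρ_nonneg τ (hsub hτ'))
        ((hρ_nonneg τ (hsub hτ')).trans hρ_le) hρ_le) (hγ_nonneg τ (hsub hτ'))
  have hM_cont : ContinuousOn M (Icc t₀ t) :=
    uIcc_of_le ht.1 ▸ intervalIntegral.continuousOn_primitive_interval' hfi left_mem_uIcc
  have hMt : M t = 0 := eq_zero_of_sub_le_mul_of_lintegral_eq_top ht.1 hM_cont hM_mono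
    intervalIntegral.integral_same hΓ_mono (hμ_mono.mono Ioi_subset_Ici_self) hM_sub hosgood
  exact (hρM t ⟨ht.1, le_rfl⟩).trans hMt.le

/-- **Osgood's lemma, case `a = 0`.** If `ρ` is measurable and nonnegative on `[t₀,t₁]`,
`γ` is nonnegative and integrable on `[t₀,t₁]`, `μ : [0,∞) → [0,∞)` is continuous,
nondecreasing with `μ 0 = 0`, if `ρ t ≤ ∫_{t₀}^t γ τ * μ (ρ τ) dτ` on `[t₀,t₁]`, and the
Osgood condition `∫₀¹ dr / μ r = +∞` holds, then `ρ ≡ 0` on `[t₀,t₁]`. -/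
theorem osgood_lemma_zero (t₀ t₁ : ℝ) (ht : t₀ ≤ t₁) (ρ γ μ : ℝ → ℝ)
    (hρ_meas : AEMeasurable ρ (volume.restrict (Icc t₀ t₁)))
    (hρ_nonneg : ∀ t ∈ Icc t₀ t₁, 0 ≤ ρ t)
    (hγ_nonneg : ∀ t ∈ Icc t₀ t₁, 0 ≤ γ t)
    (hγ_int : IntegrableOn γ (Icc t₀ t₁))
    (hμ_cont : ContinuousOn μ (Ici 0))
    (hμ_mono : MonotoneOn μ (Ici 0))
    (hμ_nonneg : ∀ x, 0 ≤ x → 0 ≤ μ x)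
    (hμ_zero : μ 0 = 0)
    (hbound : ∀ t ∈ Icc t₀ t₁, ρ t ≤ ∫ τ in t₀..t, γ τ * μ (ρ τ))
    (hosgood : ∫⁻ r in Ioo (0:ℝ) 1, ENNReal.ofReal (μ r)⁻¹ = ⊤) :
    ∀ t ∈ Icc t₀ t₁, ρ t = 0 :=
  osgood_lemma_zero_general t₀ t₁ ρ γ μ hρ_nonneg hγ_nonneg hγ_int hμ_mono hμ_nonneg hbound hosgood
end

section
/- For any 1 ≤ p, ρ ≤ ∞, s ∈ ℝ, 0 < ε ≤ 1, and any f in the relevant mixed time-space Besov spaces on [0,T] × ℝ^d, one has ‖f‖_{L̃^ρ_T(Ḃ^s_{p,1})} ≤ C (‖f‖_{L̃^ρ_T(Ḃ^s_{p,∞})}/ε) · log( e + (‖f‖_{L̃^ρ_T(Ḃ^{s−ε}_{p,∞})} + ‖f‖_{L̃^ρ_T(Ḃ^{s+ε}_{p,∞})}) / ‖f‖_{L̃^ρ_T(Ḃ^s_{p,∞})} ), with C independent of f, ε, T. -/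
open MeasureTheory Set ENNReal NNReal

noncomputable section

/-- The homogeneous Littlewood–Paley block `Δ_k f = 𝓕⁻¹(φ(2^{-k}·)) ∗ f`. -/
def LPblock {d : ℕ} (φ : EuclideanSpace ℝ (Fin d) → ℂ) (k : ℤ)
    (f : EuclideanSpace ℝ (Fin d) → ℂ) : EuclideanSpace ℝ (Fin d) → ℂ :=
  fun x => ∫ y, (FourierTransformInv.fourierInv (fun ξ => φ ((2:ℝ) ^ (-k) • ξ)) :
    EuclideanSpace ℝ (Fin d) → ℂ) (x - y) * f y

/-- `φ` generates a homogeneous dyadic Littlewood–Paley partition of unity: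
it is smooth, supported in the annulus `{5/6 ≤ |ξ| ≤ 12/5}`, radial, and
`∑_{k∈ℤ} φ(2^{-k} ξ) = 1` for `ξ ≠ 0`. -/
def IsLPfunction {d : ℕ} (φ : EuclideanSpace ℝ (Fin d) → ℂ) : Prop :=
  ContDiff ℝ (⊤ : ℕ∞) φ ∧
  (∀ ξ, φ ξ ≠ 0 → 5/6 ≤ ‖ξ‖ ∧ ‖ξ‖ ≤ 12/5) ∧
  (∀ ξ η : EuclideanSpace ℝ (Fin d), ‖ξ‖ = ‖η‖ → φ ξ = φ η) ∧
  (∀ ξ : EuclideanSpace ℝ (Fin d), ξ ≠ 0 → ∑' k : ℤ, φ ((2:ℝ) ^ (-k) • ξ) = 1)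

/-- The homogeneous Besov norm `‖f‖_{Ḃ^s_{2,1}} = ∑_k 2^{ks} ‖Δ_k f‖_{L²}`. -/
def besovNorm1 {d : ℕ} (φ : EuclideanSpace ℝ (Fin d) → ℂ) (s : ℝ)
    (f : EuclideanSpace ℝ (Fin d) → ℂ) : ℝ≥0∞ :=
  ∑' k : ℤ, ENNReal.ofReal ((2:ℝ) ^ ((k:ℝ) * s)) * eLpNorm (LPblock φ k f) 2 volume

/-- The homogeneous Besov norm `‖f‖_{Ḃ^s_{2,∞}} = sup_k 2^{ks} ‖Δ_k f‖_{L²}`. -/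
def besovNormInf {d : ℕ} (φ : EuclideanSpace ℝ (Fin d) → ℂ) (s : ℝ)
    (f : EuclideanSpace ℝ (Fin d) → ℂ) : ℝ≥0∞ :=
  ⨆ k : ℤ, ENNReal.ofReal ((2:ℝ) ^ ((k:ℝ) * s)) * eLpNorm (LPblock φ k f) 2 volume

/-- The homogeneous Besov norm `‖f‖_{Ḃ^s_{2,r}}` (ℓ^r norm of the dyadic pieces). -/
def besovNormGen {d : ℕ} (φ : EuclideanSpace ℝ (Fin d) → ℂ) (s : ℝ) (r : ℝ≥0∞)
    (f : EuclideanSpace ℝ (Fin d) → ℂ) : ℝ≥0∞ :=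
  if r = ⊤ then besovNormInf φ s f
  else (∑' k : ℤ, (ENNReal.ofReal ((2:ℝ) ^ ((k:ℝ) * s)) *
      eLpNorm (LPblock φ k f) 2 volume) ^ r.toReal) ^ (1 / r.toReal)


/-- The time Lebesgue norm `‖g‖_{L^ρ(0,T)}` of an `ℝ≥0∞`-valued function. -/
def timeLp (ρ : ℝ≥0∞) (T : ℝ) (g : ℝ → ℝ≥0∞) : ℝ≥0∞ :=
  if ρ = ⊤ then essSup g (volume.restrict (Ioc (0:ℝ) T))
  else (∫⁻ t in Ioc (0:ℝ) T, g t ^ ρ.toReal) ^ (1 / ρ.toReal)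

/-- The Chemin–Lerner norm `‖f‖_{L̃^ρ_T(Ḃ^s_{p,1})} = ∑_k 2^{ks} ‖Δ_k f‖_{L^ρ_T(L^p)}`. -/
def cheminLerner1 {d : ℕ} (φ : EuclideanSpace ℝ (Fin d) → ℂ) (s : ℝ) (p ρ : ℝ≥0∞)
    (T : ℝ) (f : ℝ → EuclideanSpace ℝ (Fin d) → ℂ) : ℝ≥0∞ :=
  ∑' k : ℤ, ENNReal.ofReal ((2:ℝ) ^ ((k:ℝ) * s)) *
    timeLp ρ T (fun t => eLpNorm (LPblock φ k (f t)) p volume)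

/-- The Chemin–Lerner norm `‖f‖_{L̃^ρ_T(Ḃ^s_{p,∞})} = sup_k 2^{ks} ‖Δ_k f‖_{L^ρ_T(L^p)}`. -/
def cheminLernerInf {d : ℕ} (φ : EuclideanSpace ℝ (Fin d) → ℂ) (s : ℝ) (p ρ : ℝ≥0∞)
    (T : ℝ) (f : ℝ → EuclideanSpace ℝ (Fin d) → ℂ) : ℝ≥0∞ :=
  ⨆ k : ℤ, ENNReal.ofReal ((2:ℝ) ^ ((k:ℝ) * s)) *
    timeLp ρ T (fun t => eLpNorm (LPblock φ k (f t)) p volume)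

lemma two_rpow_pos (u : ℝ) : (0:ℝ) < (2:ℝ) ^ u := Real.rpow_pos_of_pos two_pos u

set_option maxHeartbeats 1000000 in
lemma log_interp_key (ε : ℝ) (hε : 0 < ε) (hε1 : ε ≤ 1) (a : ℤ → ℝ≥0∞)
    (hX0 : (⨆ k : ℤ, a k) ≠ 0) (hXt : (⨆ k : ℤ, a k) ≠ ⊤)
    (hAt : (⨆ k : ℤ, ENNReal.ofReal ((2:ℝ) ^ (-((k:ℝ) * ε))) * a k) ≠ ⊤)
    (hBt : (⨆ k : ℤ, ENNReal.ofReal ((2:ℝ) ^ ((k:ℝ) * ε)) * a k) ≠ ⊤) :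
    (∑' k : ℤ, a k).toReal ≤ 100 * ((⨆ k : ℤ, a k).toReal / ε) *
      Real.log (Real.exp 1 +
        ((⨆ k : ℤ, ENNReal.ofReal ((2:ℝ) ^ (-((k:ℝ) * ε))) * a k).toReal +
         (⨆ k : ℤ, ENNReal.ofReal ((2:ℝ) ^ ((k:ℝ) * ε)) * a k).toReal) /
        (⨆ k : ℤ, a k).toReal) := by
  set Xe := ⨆ k : ℤ, a k with hXe
  set Ae := ⨆ k : ℤ, ENNReal.ofReal ((2:ℝ) ^ (-((k:ℝ) * ε))) * a k with hAe
  set Be := ⨆ k : ℤ, ENNReal.ofReal ((2:ℝ) ^ ((k:ℝ) * ε)) * a k with hBe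
  set X : ℝ := Xe.toReal with hXdef
  set A : ℝ := Ae.toReal with hAdef
  set B : ℝ := Be.toReal with hBdef
  have hX : 0 < X := ENNReal.toReal_pos hX0 hXt
  have hA : 0 ≤ A := ENNReal.toReal_nonneg
  have hB : 0 ≤ B := ENNReal.toReal_nonneg
  have hlog2 : (0.6931471803 : ℝ) < Real.log 2 := Real.log_two_gt_d9
  have hlog2' : (0:ℝ) < Real.log 2 := by linarith
  have hlog2'' : Real.log 2 < 1 := by
    have := Real.log_two_lt_d9; linarith
  set R : ℝ := Real.exp 1 + (A + B) / X with hR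
  have hRe : Real.exp 1 ≤ R := le_add_of_nonneg_right (by positivity)
  have hRpos : 0 < R := lt_of_lt_of_le (Real.exp_pos 1) hRe
  set L : ℝ := Real.log R with hLdef
  have hL1 : 1 ≤ L := by
    rw [hLdef]
    calc (1:ℝ) = Real.log (Real.exp 1) := (Real.log_exp 1).symm
      _ ≤ Real.log R := Real.log_le_log (Real.exp_pos 1) hRe
  set N : ℕ := ⌈L / (ε * Real.log 2)⌉₊ with hNdef
  have hNge : L / (ε * Real.log 2) ≤ (N:ℝ) := Nat.le_ceil _
  have hNL : L ≤ (N:ℝ) * (ε * Real.log 2) := by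
    rw [div_le_iff₀ (by positivity)] at hNge; exact hNge
  have hNup : (N:ℝ) ≤ L / (ε * Real.log 2) + 1 :=
    (Nat.ceil_lt_add_one (by positivity)).le
  -- pointwise bounds
  have haX : ∀ k : ℤ, a k ≤ Xe := fun k => hXe ▸ le_iSup a k
  have haB : ∀ k : ℤ, a k ≤ ENNReal.ofReal ((2:ℝ) ^ (-((k:ℝ) * ε))) * Be := by
    intro k
    have h1 : ENNReal.ofReal ((2:ℝ) ^ ((k:ℝ) * ε)) * a k ≤ Be :=
      hBe ▸ le_iSup (fun k : ℤ => ENNReal.ofReal ((2:ℝ) ^ ((k:ℝ) * ε)) * a k) k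
    have h2 : a k = ENNReal.ofReal ((2:ℝ) ^ (-((k:ℝ) * ε))) *
        (ENNReal.ofReal ((2:ℝ) ^ ((k:ℝ) * ε)) * a k) := by
      rw [← mul_assoc, ← ENNReal.ofReal_mul (two_rpow_pos _).le,
        ← Real.rpow_add two_pos]
      norm_num
    rw [h2]; exact mul_le_mul_right h1 _
  have haA : ∀ k : ℤ, a k ≤ ENNReal.ofReal ((2:ℝ) ^ ((k:ℝ) * ε)) * Ae := by
    intro k
    have h1 : ENNReal.ofReal ((2:ℝ) ^ (-((k:ℝ) * ε))) * a k ≤ Ae :=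
      hAe ▸ le_iSup (fun k : ℤ => ENNReal.ofReal ((2:ℝ) ^ (-((k:ℝ) * ε))) * a k) k
    have h2 : a k = ENNReal.ofReal ((2:ℝ) ^ ((k:ℝ) * ε)) *
        (ENNReal.ofReal ((2:ℝ) ^ (-((k:ℝ) * ε))) * a k) := by
      rw [← mul_assoc, ← ENNReal.ofReal_mul (two_rpow_pos _).le,
        ← Real.rpow_add two_pos]
      norm_num
    rw [h2]; exact mul_le_mul_right h1 _
  -- splitting the sum
  set I1 : Set ℤ := ↑(Finset.Icc (-(N:ℤ)) (N:ℤ)) with hI1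
  have hsplit : (∑' k : ℤ, a k) ≤ (∑ k ∈ Finset.Icc (-(N:ℤ)) (N:ℤ), a k)
      + ((∑' n : ℕ, a ((N:ℤ) + 1 + n)) + (∑' n : ℕ, a (-(N:ℤ) - 1 - n))) := by
    have hpt : ∀ k : ℤ, a k ≤ I1.indicator a k +
        ((Set.Ioi (N:ℤ)).indicator a k + (Set.Iio (-(N:ℤ))).indicator a k) := by
      intro k
      rcases lt_or_ge (N:ℤ) k with h | h
      · have h2 : (Set.Ioi (N:ℤ)).indicator a k = a k := Set.indicator_of_mem (Set.mem_Ioi.2 h) a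
        calc a k = (Set.Ioi (N:ℤ)).indicator a k := h2.symm
          _ ≤ (Set.Ioi (N:ℤ)).indicator a k + (Set.Iio (-(N:ℤ))).indicator a k := le_self_add
          _ ≤ _ := le_add_self
      · rcases lt_or_ge k (-(N:ℤ)) with h2 | h2
        · have h3 : (Set.Iio (-(N:ℤ))).indicator a k = a k := Set.indicator_of_mem (Set.mem_Iio.2 h2) a
          calc a k = (Set.Iio (-(N:ℤ))).indicator a k := h3.symm
            _ ≤ (Set.Ioi (N:ℤ)).indicator a k + (Set.Iio (-(N:ℤ))).indicator a k := le_add_self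
            _ ≤ _ := le_add_self
        · have hmem : k ∈ I1 := by
            rw [hI1]; simp only [Finset.coe_Icc, Set.mem_Icc]; exact ⟨h2, h⟩
          have h3 : I1.indicator a k = a k := Set.indicator_of_mem hmem a
          calc a k = I1.indicator a k := h3.symm
            _ ≤ _ := le_self_add
    have e1 : (∑' k : ℤ, I1.indicator a k) = ∑ k ∈ Finset.Icc (-(N:ℤ)) (N:ℤ), a k := by
      rw [← tsum_subtype, hI1]; exact Finset.tsum_subtype' _ a
    have e2 : (∑' k : ℤ, (Set.Ioi (N:ℤ)).indicator a k) = ∑' n : ℕ, a ((N:ℤ) + 1 + n) := by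
      have hinj : Function.Injective (fun n : ℕ => (N:ℤ) + 1 + n) := by
        intro m n h; simpa using h
      have hsupp : Function.support ((Set.Ioi (N:ℤ)).indicator a) ⊆
          Set.range (fun n : ℕ => (N:ℤ) + 1 + n) := by
        intro k hk
        have hk' : k ∈ Set.Ioi (N:ℤ) := by
          by_contra hmem
          exact hk (Set.indicator_of_notMem hmem a)
        have hk2 : (N:ℤ) < k := hk'
        exact ⟨(k - ((N:ℤ) + 1)).toNat, by simp; omega⟩
      rw [← hinj.tsum_eq hsupp]
      refine tsum_congr fun n => ?_
      exact Set.indicator_of_mem (by simp [Set.mem_Ioi]; omega) a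
    have e3 : (∑' k : ℤ, (Set.Iio (-(N:ℤ))).indicator a k) = ∑' n : ℕ, a (-(N:ℤ) - 1 - n) := by
      have hinj : Function.Injective (fun n : ℕ => -(N:ℤ) - 1 - n) := by
        intro m n h; simp only at h; omega
      have hsupp : Function.support ((Set.Iio (-(N:ℤ))).indicator a) ⊆
          Set.range (fun n : ℕ => -(N:ℤ) - 1 - n) := by
        intro k hk
        have hk' : k ∈ Set.Iio (-(N:ℤ)) := by
          by_contra hmem
          exact hk (Set.indicator_of_notMem hmem a)
        have hk2 : k < -(N:ℤ) := hk'
        exact ⟨(-(N:ℤ) - 1 - k).toNat, by simp; omega⟩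
      rw [← hinj.tsum_eq hsupp]
      refine tsum_congr fun n => ?_
      exact Set.indicator_of_mem (by simp [Set.mem_Iio]; omega) a
    calc (∑' k : ℤ, a k) ≤ ∑' k : ℤ, (I1.indicator a k +
        ((Set.Ioi (N:ℤ)).indicator a k + (Set.Iio (-(N:ℤ))).indicator a k)) :=
          ENNReal.tsum_le_tsum hpt
      _ = (∑' k : ℤ, I1.indicator a k) + ((∑' k : ℤ, (Set.Ioi (N:ℤ)).indicator a k)
          + (∑' k : ℤ, (Set.Iio (-(N:ℤ))).indicator a k)) := by
            rw [ENNReal.tsum_add, ENNReal.tsum_add]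
      _ = _ := by rw [e1, e2, e3]
  -- middle bound
  have hmid : (∑ k ∈ Finset.Icc (-(N:ℤ)) (N:ℤ), a k) ≤ ((2 * N + 1 : ℕ) : ℝ≥0∞) * Xe := by
    calc (∑ k ∈ Finset.Icc (-(N:ℤ)) (N:ℤ), a k) ≤ ∑ _k ∈ Finset.Icc (-(N:ℤ)) (N:ℤ), Xe :=
        Finset.sum_le_sum fun k _ => haX k
      _ = (Finset.Icc (-(N:ℤ)) (N:ℤ)).card • Xe := Finset.sum_const Xe
      _ = ((2 * N + 1 : ℕ) : ℝ≥0∞) * Xe := by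
          rw [Int.card_Icc, nsmul_eq_mul]
          congr 2
          omega
  -- geometric tail
  set r : ℝ := (2:ℝ) ^ (-ε) with hrdef
  have hr0 : 0 ≤ r := (two_rpow_pos _).le
  have hr1 : r < 1 := Real.rpow_lt_one_of_one_lt_of_neg one_lt_two (by linarith)
  set S : ℝ := (2:ℝ) ^ (-(((N:ℝ) + 1) * ε)) * (1 - r)⁻¹ with hSdef
  have hS0 : 0 ≤ S := mul_nonneg (two_rpow_pos _).le (inv_nonneg.2 (by linarith))
  have hexp : ∀ n : ℕ, (2:ℝ) ^ (-(((N:ℝ) + 1 + n) * ε)) =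
      (2:ℝ) ^ (-(((N:ℝ) + 1) * ε)) * r ^ n := by
    intro n
    rw [show -(((N:ℝ) + 1 + n) * ε) = (-(((N:ℝ) + 1) * ε)) + (-ε) * n by ring,
      Real.rpow_add two_pos]
    congr 1
    rw [Real.rpow_mul (by norm_num : (0:ℝ) ≤ 2), hrdef, Real.rpow_natCast]
  have hsumm : Summable (fun n : ℕ => (2:ℝ) ^ (-(((N:ℝ) + 1) * ε)) * r ^ n) :=
    (summable_geometric_of_lt_one hr0 hr1).mul_left _
  have htsum_ofReal : (∑' n : ℕ, ENNReal.ofReal ((2:ℝ) ^ (-(((N:ℝ) + 1 + n) * ε)))) =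
      ENNReal.ofReal S := by
    calc (∑' n : ℕ, ENNReal.ofReal ((2:ℝ) ^ (-(((N:ℝ) + 1 + n) * ε))))
        = ∑' n : ℕ, ENNReal.ofReal ((2:ℝ) ^ (-(((N:ℝ) + 1) * ε)) * r ^ n) := by
          exact tsum_congr fun n => by rw [hexp n]
      _ = ENNReal.ofReal (∑' n : ℕ, (2:ℝ) ^ (-(((N:ℝ) + 1) * ε)) * r ^ n) :=
          (ENNReal.ofReal_tsum_of_nonneg (fun n => by positivity) hsumm).symm
      _ = ENNReal.ofReal S := by
          rw [_root_.tsum_mul_left, tsum_geometric_of_lt_one hr0 hr1, hSdef]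
  have haB' : ∀ n : ℕ, a ((N:ℤ) + 1 + n) ≤
      ENNReal.ofReal ((2:ℝ) ^ (-(((N:ℝ) + 1 + n) * ε))) * Be := by
    intro n
    have h := haB ((N:ℤ) + 1 + n)
    have : -((((N:ℤ) + 1 + n : ℤ) : ℝ) * ε) = -(((N:ℝ) + 1 + n) * ε) := by push_cast; ring
    rwa [this] at h
  have haA' : ∀ n : ℕ, a (-(N:ℤ) - 1 - n) ≤
      ENNReal.ofReal ((2:ℝ) ^ (-(((N:ℝ) + 1 + n) * ε))) * Ae := by
    intro n
    have h := haA (-(N:ℤ) - 1 - n)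
    have : (((-(N:ℤ) - 1 - n : ℤ) : ℝ) * ε) = -(((N:ℝ) + 1 + n) * ε) := by push_cast; ring
    rwa [this] at h
  have htailB : (∑' n : ℕ, a ((N:ℤ) + 1 + n)) ≤ ENNReal.ofReal S * Be := by
    calc (∑' n : ℕ, a ((N:ℤ) + 1 + n))
        ≤ ∑' n : ℕ, ENNReal.ofReal ((2:ℝ) ^ (-(((N:ℝ) + 1 + n) * ε))) * Be :=
          ENNReal.tsum_le_tsum haB'
      _ = (∑' n : ℕ, ENNReal.ofReal ((2:ℝ) ^ (-(((N:ℝ) + 1 + n) * ε)))) * Be :=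
          ENNReal.tsum_mul_right
      _ = ENNReal.ofReal S * Be := by rw [htsum_ofReal]
  have htailA : (∑' n : ℕ, a (-(N:ℤ) - 1 - n)) ≤ ENNReal.ofReal S * Ae := by
    calc (∑' n : ℕ, a (-(N:ℤ) - 1 - n))
        ≤ ∑' n : ℕ, ENNReal.ofReal ((2:ℝ) ^ (-(((N:ℝ) + 1 + n) * ε))) * Ae :=
          ENNReal.tsum_le_tsum haA'
      _ = (∑' n : ℕ, ENNReal.ofReal ((2:ℝ) ^ (-(((N:ℝ) + 1 + n) * ε)))) * Ae :=
          ENNReal.tsum_mul_right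
      _ = ENNReal.ofReal S * Ae := by rw [htsum_ofReal]
  have htotal : (∑' k : ℤ, a k) ≤ ((2 * N + 1 : ℕ) : ℝ≥0∞) * Xe +
      (ENNReal.ofReal S * Be + ENNReal.ofReal S * Ae) :=
    hsplit.trans (add_le_add hmid (add_le_add htailB htailA))
  have hfin1 : ((2 * N + 1 : ℕ) : ℝ≥0∞) * Xe ≠ ⊤ :=
    ENNReal.mul_ne_top (ENNReal.natCast_ne_top _) hXt
  have hfin2 : ENNReal.ofReal S * Be ≠ ⊤ := ENNReal.mul_ne_top ENNReal.ofReal_ne_top hBt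
  have hfin3 : ENNReal.ofReal S * Ae ≠ ⊤ := ENNReal.mul_ne_top ENNReal.ofReal_ne_top hAt
  have h5 : (∑' k : ℤ, a k).toReal ≤ (2 * (N:ℝ) + 1) * X + (S * B + S * A) := by
    have h := ENNReal.toReal_mono (by
      exact ENNReal.add_ne_top.2 ⟨hfin1, ENNReal.add_ne_top.2 ⟨hfin2, hfin3⟩⟩) htotal
    rw [ENNReal.toReal_add hfin1 (ENNReal.add_ne_top.2 ⟨hfin2, hfin3⟩),
      ENNReal.toReal_add hfin2 hfin3, ENNReal.toReal_mul, ENNReal.toReal_mul,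
      ENNReal.toReal_mul, ENNReal.toReal_ofReal hS0] at h
    rw [ENNReal.toReal_natCast] at h
    calc (∑' k : ℤ, a k).toReal ≤ ((2 * N + 1 : ℕ) : ℝ) * X + (S * B + S * A) := h
      _ = (2 * (N:ℝ) + 1) * X + (S * B + S * A) := by push_cast; ring
  -- real estimates
  set x : ℝ := ε * Real.log 2 with hxdef
  have hx0 : 0 < x := by positivity
  have hx1 : x ≤ Real.log 2 := by
    rw [hxdef]; nlinarith [hlog2', hε1, hε]
  have hrx : r = Real.exp (-x) := by
    rw [hrdef, Real.rpow_def_of_pos two_pos, hxdef]; congr 1; ring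
  have hrle : r ≤ (1 + x)⁻¹ := by
    rw [hrx, Real.exp_neg]
    have h1 : x + 1 ≤ Real.exp x := Real.add_one_le_exp x
    exact inv_anti₀ (by linarith) (by linarith)
  have h1r : ε / 4 ≤ 1 - r := by
    have h2 : (1 + x)⁻¹ ≤ 1 - ε / 4 := by
      rw [← one_div, div_le_iff₀ (by linarith : (0:ℝ) < 1 + x)]
      rw [hxdef]
      nlinarith [hε, hε1, hlog2, mul_pos hε hlog2']
    linarith [hrle.trans h2]
  have hinv_r : (1 - r)⁻¹ ≤ 4 / ε := by
    calc (1 - r)⁻¹ ≤ (ε / 4)⁻¹ := inv_anti₀ (by positivity) h1r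
      _ = 4 / ε := inv_div ε 4
  have hfirst : (2:ℝ) ^ (-(((N:ℝ) + 1) * ε)) ≤ R⁻¹ := by
    have e1 : (2:ℝ) ^ (-(((N:ℝ) + 1) * ε)) =
        Real.exp (Real.log 2 * (-(((N:ℝ) + 1) * ε))) := Real.rpow_def_of_pos two_pos _
    have e2 : R⁻¹ = Real.exp (-L) := by rw [hLdef, Real.exp_neg, Real.exp_log hRpos]
    rw [e1, e2]
    apply Real.exp_le_exp.2
    nlinarith [hNL, mul_pos hε hlog2']
  have hSle : S ≤ (4 / ε) * R⁻¹ := by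
    rw [hSdef]
    calc (2:ℝ) ^ (-(((N:ℝ) + 1) * ε)) * (1 - r)⁻¹ ≤ R⁻¹ * (4 / ε) :=
        mul_le_mul hfirst hinv_r (inv_nonneg.2 (by linarith)) (inv_nonneg.2 hRpos.le)
      _ = (4 / ε) * R⁻¹ := mul_comm _ _
  have hABR : (B + A) * R⁻¹ ≤ X := by
    rw [← div_eq_mul_inv, div_le_iff₀ hRpos, hR]
    have he : X * (Real.exp 1 + (A + B) / X) = X * Real.exp 1 + (A + B) := by
      field_simp
    rw [he]
    nlinarith [Real.exp_pos 1, hX]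
  have htail_real : S * B + S * A ≤ (4 / ε) * X := by
    calc S * B + S * A = S * (B + A) := by ring
      _ ≤ ((4 / ε) * R⁻¹) * (B + A) := mul_le_mul_of_nonneg_right hSle (by linarith)
      _ = (4 / ε) * ((B + A) * R⁻¹) := by ring
      _ ≤ (4 / ε) * X := mul_le_mul_of_nonneg_left hABR (by positivity)
  have hLe : (1:ℝ) ≤ L / ε := by
    rw [le_div_iff₀ hε]; nlinarith [hL1, hε1]
  have hNle : (N:ℝ) ≤ 2.5 * (L / ε) := by
    have h1 : L / (ε * Real.log 2) ≤ 1.5 * (L / ε) := by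
      rw [show L / (ε * Real.log 2) = (L / ε) / Real.log 2 by rw [div_div]]
      rw [div_le_iff₀ hlog2']
      have ht : (0:ℝ) ≤ L / ε := by positivity
      nlinarith [mul_le_mul_of_nonneg_left hlog2.le ht]
    have h2 := hNup
    have h3 : 1.5 * (L / ε) + 1 ≤ 2.5 * (L / ε) := by
      linarith [hLe]
    linarith
  have hfinal : (2 * (N:ℝ) + 1) * X + (S * B + S * A) ≤ 100 * (X / ε) * L := by
    have hm : (2 * (N:ℝ) + 1) * X ≤ (6 * (L / ε)) * X := by
      apply mul_le_mul_of_nonneg_right _ hX.le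
      have : 2.5 * (L / ε) + 2.5 * (L / ε) = 5 * (L / ε) := by ring
      linarith [hNle, hLe]
    have ht : S * B + S * A ≤ (4 * (L / ε)) * X := by
      refine htail_real.trans ?_
      have h4 : (4 / ε) * X = 4 * (X / ε) := by ring
      have h5 : (4 * (L / ε)) * X = 4 * (L * (X / ε)) := by ring
      rw [h4, h5]
      have hXe' : 0 ≤ X / ε := by positivity
      nlinarith [hL1, hXe']
    have hnn : 0 ≤ (X / ε) * L := by positivity
    calc (2 * (N:ℝ) + 1) * X + (S * B + S * A) ≤ (6 * (L / ε)) * X + (4 * (L / ε)) * X :=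
        add_le_add hm ht
      _ = 10 * ((X / ε) * L) := by ring
      _ ≤ 100 * ((X / ε) * L) := by linarith
      _ = 100 * (X / ε) * L := by ring
  linarith [h5, hfinal]

/-- **Logarithmic interpolation inequality in Chemin–Lerner spaces.** For any
`1 ≤ p, ρ ≤ ∞`, `s ∈ ℝ`, `0 < ε ≤ 1` and `f` in the relevant mixed time-space Besov
spaces, `‖f‖_{L̃^ρ_T(Ḃ^s_{p,1})} ≤ C (‖f‖_{L̃^ρ_T(Ḃ^s_{p,∞})}/ε) ·
log (e + (‖f‖_{L̃^ρ_T(Ḃ^{s−ε}_{p,∞})} + ‖f‖_{L̃^ρ_T(Ḃ^{s+ε}_{p,∞})})/‖f‖_{L̃^ρ_T(Ḃ^s_{p,∞})})`,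
with `C` independent of `f`, `ε`, `T` (and of `p`, `ρ`, `s`). -/
theorem log_interpolation_chemin_lerner (d : ℕ) (hd : 1 ≤ d)
    (φ : EuclideanSpace ℝ (Fin d) → ℂ) (hφ : IsLPfunction φ) :
    ∃ C : ℝ, 0 < C ∧ ∀ (p ρ : ℝ≥0∞), 1 ≤ p → 1 ≤ ρ → ∀ (s ε T : ℝ),
      0 < ε → ε ≤ 1 → 0 < T →
      ∀ f : ℝ → EuclideanSpace ℝ (Fin d) → ℂ,
      cheminLernerInf φ s p ρ T f ≠ 0 → cheminLernerInf φ s p ρ T f ≠ ⊤ →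
      cheminLernerInf φ (s - ε) p ρ T f ≠ ⊤ → cheminLernerInf φ (s + ε) p ρ T f ≠ ⊤ →
      (cheminLerner1 φ s p ρ T f).toReal ≤
        C * ((cheminLernerInf φ s p ρ T f).toReal / ε) *
          Real.log (Real.exp 1 +
            ((cheminLernerInf φ (s - ε) p ρ T f).toReal
              + (cheminLernerInf φ (s + ε) p ρ T f).toReal) /
            (cheminLernerInf φ s p ρ T f).toReal) := by
  refine ⟨100, by norm_num, ?_⟩
  intro p ρ hp hρ s ε T hε hε1 hT f h0 ht hmt hpt
  set a : ℤ → ℝ≥0∞ := fun k => ENNReal.ofReal ((2:ℝ) ^ ((k:ℝ) * s)) *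
    timeLp ρ T (fun t => eLpNorm (LPblock φ k (f t)) p volume) with ha
  have e1 : cheminLerner1 φ s p ρ T f = ∑' k : ℤ, a k := rfl
  have e2 : cheminLernerInf φ s p ρ T f = ⨆ k : ℤ, a k := rfl
  have e3 : cheminLernerInf φ (s - ε) p ρ T f =
      ⨆ k : ℤ, ENNReal.ofReal ((2:ℝ) ^ (-((k:ℝ) * ε))) * a k := by
    unfold cheminLernerInf
    refine iSup_congr fun k => ?_
    rw [ha]
    have h : (k:ℝ) * (s - ε) = -((k:ℝ) * ε) + (k:ℝ) * s := by ring
    rw [h, Real.rpow_add two_pos, ENNReal.ofReal_mul (two_rpow_pos _).le, mul_assoc]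
  have e4 : cheminLernerInf φ (s + ε) p ρ T f =
      ⨆ k : ℤ, ENNReal.ofReal ((2:ℝ) ^ ((k:ℝ) * ε)) * a k := by
    unfold cheminLernerInf
    refine iSup_congr fun k => ?_
    rw [ha]
    have h : (k:ℝ) * (s + ε) = (k:ℝ) * ε + (k:ℝ) * s := by ring
    rw [h, Real.rpow_add two_pos, ENNReal.ofReal_mul (two_rpow_pos _).le, mul_assoc]
  rw [e2] at h0 ht
  rw [e3] at hmt
  rw [e4] at hpt
  rw [e1, e2, e3, e4]
  exact log_interp_key ε hε hε1 a h0 ht hmt hpt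


end
end

section
/- Abstract sequence version of logarithmic interpolation: let (a_k)_{k∈ℤ} be a nonnegative sequence, let 0 < ε ≤ 1, and set A = sup_k a_k, B = sup_k 2^{−εk} a_k + sup_k 2^{εk} a_k. If 0 < A < ∞ and B < ∞, then Σ_{k∈ℤ} a_k ≤ C (A/ε) log(e + B/A) for an absolute constant C. -/
/-!
Since `a_k ≤ A` and `a_k ≤ B 2^{-ε|k|}`, splitting the sum at `|k| = N` gives
`∑ a_k ≤ 2 (N + 1) A + 2 B 2^{-εN} / (2^ε - 1)`. Choosing `N ≈ log (e + B/A) / (ε log 2)` makes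
`B 2^{-εN} ≤ A`, and `2^ε - 1 ≥ ε log 2` bounds the geometric tail by a multiple of `A / ε`.
-/

open Real

section GeometricMajorant

variable {A B r : ℝ}

theorem summable_of_le_geometric {g : ℕ → ℝ} (hg : ∀ n, 0 ≤ g n) (hB : ∀ n, g n ≤ B * r ^ n)
    (hr₀ : 0 ≤ r) (hr₁ : r < 1) : Summable g :=
  Summable.of_nonneg_of_le hg hB ((summable_geometric_of_lt_one hr₀ hr₁).mul_left B)

theorem tsum_le_of_le_of_le_geometric {g : ℕ → ℝ} (hg : ∀ n, 0 ≤ g n) (hA : ∀ n, g n ≤ A)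
    (hB : ∀ n, g n ≤ B * r ^ n) (hr₀ : 0 ≤ r) (hr₁ : r < 1) (N : ℕ) :
    ∑' n, g n ≤ (N + 1) * A + B * r ^ (N + 1) / (1 - r) := by
  have hg_sum := summable_of_le_geometric hg hB hr₀ hr₁
  have hhead : ∑ i ∈ Finset.range (N + 1), g i ≤ (N + 1) * A := by
    simpa using Finset.sum_le_card_nsmul (Finset.range (N + 1)) g A fun i _ => hA i
  have htail : ∑' i, g (i + (N + 1)) ≤ B * r ^ (N + 1) / (1 - r) :=
    calc ∑' i, g (i + (N + 1)) ≤ ∑' i, B * r ^ (N + 1) * r ^ i :=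
          Summable.tsum_le_tsum (fun i => by rw [mul_assoc, ← pow_add, add_comm]; exact hB _)
            ((summable_nat_add_iff _).mpr hg_sum)
            ((summable_geometric_of_lt_one hr₀ hr₁).mul_left _)
      _ = B * r ^ (N + 1) / (1 - r) := by
          rw [tsum_mul_left, tsum_geometric_of_lt_one hr₀ hr₁, div_eq_mul_inv]
  rw [← hg_sum.sum_add_tsum_nat_add (N + 1)]
  exact add_le_add hhead htail

variable {f : ℤ → ℝ}

theorem summable_int_of_le_geometric_natAbs (hf : ∀ k, 0 ≤ f k) (hB : ∀ k, f k ≤ B * r ^ k.natAbs)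
    (hr₀ : 0 ≤ r) (hr₁ : r < 1) : Summable f :=
  Summable.of_nat_of_neg (summable_of_le_geometric (fun _ => hf _) (fun _ => hB _) hr₀ hr₁)
    (summable_of_le_geometric (fun _ => hf _) (fun n => by simpa using hB (-n)) hr₀ hr₁)

theorem tsum_int_le_of_le_of_le_geometric_natAbs (hf : ∀ k, 0 ≤ f k) (hA : ∀ k, f k ≤ A)
    (hB : ∀ k, f k ≤ B * r ^ k.natAbs) (hr₀ : 0 ≤ r) (hr₁ : r < 1) (N : ℕ) :
    ∑' k, f k ≤ 2 * ((N + 1) * A + B * r ^ (N + 1) / (1 - r)) := by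
  have hB_neg : ∀ n : ℕ, f (-n) ≤ B * r ^ n := fun n => by simpa using hB (-n)
  rw [Summable.tsum_of_nat_of_neg
    (summable_of_le_geometric (fun _ => hf _) (fun _ => hB _) hr₀ hr₁)
    (summable_of_le_geometric (fun _ => hf _) hB_neg hr₀ hr₁)]
  linarith [hf 0,
    tsum_le_of_le_of_le_geometric (fun n => hf n) (fun n => hA n) (fun n => hB n) hr₀ hr₁ N,
    tsum_le_of_le_of_le_geometric (fun n => hf (-n)) (fun n => hA (-n)) hB_neg hr₀ hr₁ N]

end GeometricMajorant

theorem le_mul_two_rpow_neg_pow_natAbs {ε x B₁ B₂ : ℝ} {k : ℤ} (hx : 0 ≤ x)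
    (h₁ : (2 : ℝ) ^ (-(ε * k)) * x ≤ B₁) (h₂ : (2 : ℝ) ^ (ε * k) * x ≤ B₂) :
    x ≤ (B₁ + B₂) * ((2 : ℝ) ^ (-ε)) ^ k.natAbs := by
  have hB₁ : 0 ≤ B₁ := le_trans (by positivity) h₁
  have hB₂ : 0 ≤ B₂ := le_trans (by positivity) h₂
  have habs : (2 : ℝ) ^ (ε * |(k : ℝ)|) * x ≤ B₁ + B₂ := by
    rcases abs_cases (k : ℝ) with ⟨hk, -⟩ | ⟨hk, -⟩ <;> rw [hk]
    · linarith
    · rw [mul_neg]; linarith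
  rw [← Real.rpow_natCast, ← Real.rpow_mul zero_le_two, Nat.cast_natAbs, Int.cast_abs, neg_mul,
    Real.rpow_neg zero_le_two, ← div_eq_mul_inv, le_div_iff₀ (by positivity), mul_comm x]
  exact habs

theorem exp_neg_div_one_sub_exp_neg_le {D : ℝ} (hD : 0 < D) :
    exp (-D) / (1 - exp (-D)) ≤ 1 / D := by
  have hlt : exp (-D) < 1 := exp_lt_one_iff.mpr (neg_lt_zero.mpr hD)
  rw [div_le_div_iff₀ (by linarith) hD]
  have hmul : exp (-D) * exp D = 1 := by rw [← exp_add, neg_add_cancel, exp_zero]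
  nlinarith [add_one_le_exp D, exp_pos (-D)]

theorem mul_exp_neg_log_exp_one_add_div_le {A B : ℝ} (hA : 0 < A) (hB : 0 ≤ B) :
    B * exp (-log (exp 1 + B / A)) ≤ A := by
  have hpos : 0 < exp 1 + B / A := by positivity
  rw [exp_neg, exp_log hpos, ← div_eq_mul_inv, div_le_iff₀ hpos, mul_add, mul_div_cancel₀ _ hA.ne']
  nlinarith [exp_pos 1]

theorem split_bound_le_sixteen_mul_div {A ε M : ℝ} (hA : 0 < A) (hε₀ : 0 < ε) (hε₁ : ε ≤ 1)
    (hM : 1 ≤ M) : 2 * ((M / (ε * log 2) + 2) * A + A / (ε * log 2)) ≤ 16 * (A / ε) * M := by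
  have hlog₀ : 1 / 2 < log 2 := by linarith [log_two_gt_d9]
  have hlog₁ : log 2 < 1 := by linarith [log_two_lt_d9]
  have hD : 0 < ε * log 2 := by positivity
  have hdiff : 16 * (A / ε) * M - 2 * ((M / (ε * log 2) + 2) * A + A / (ε * log 2)) =
      2 * A * (8 * M * log 2 - M - 2 * (ε * log 2) - 1) / (ε * log 2) := by
    field_simp
    ring
  rw [← sub_nonneg, hdiff]
  exact div_nonneg (mul_nonneg (by positivity) (by nlinarith)) hD.le

theorem mul_exp_neg_pow_ceil_div_one_sub_le {A B D : ℝ} (hA : 0 < A) (hB : 0 ≤ B) (hD : 0 < D) :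
    B * exp (-D) ^ (⌈log (exp 1 + B / A) / D⌉₊ + 1) / (1 - exp (-D)) ≤ A / D := by
  set N := ⌈log (exp 1 + B / A) / D⌉₊
  have hhead : B * exp (-D) ^ N ≤ A := calc
    B * exp (-D) ^ N = B * exp (-(N * D)) := by rw [← exp_nat_mul, mul_neg]
    _ ≤ B * exp (-log (exp 1 + B / A)) := by
      gcongr
      exact (div_le_iff₀ hD).mp (Nat.le_ceil _)
    _ ≤ A := mul_exp_neg_log_exp_one_add_div_le hA hB
  have hlt : exp (-D) < 1 := exp_lt_one_iff.mpr (neg_lt_zero.mpr hD)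
  calc B * exp (-D) ^ (N + 1) / (1 - exp (-D))
        = B * exp (-D) ^ N * (exp (-D) / (1 - exp (-D))) := by ring
    _ ≤ A * (1 / D) := mul_le_mul hhead (exp_neg_div_one_sub_exp_neg_le hD)
        (div_nonneg (exp_pos _).le (by linarith)) hA.le
    _ = A / D := mul_one_div A D

/-- **Abstract sequence version of logarithmic interpolation.** There is an absolute
constant `C > 0` such that for every nonnegative sequence `(a_k)_{k ∈ ℤ}` and `0 < ε ≤ 1`,
with `A = sup_k a_k` and `B = sup_k 2^{-εk} a_k + sup_k 2^{εk} a_k` finite and `A > 0`,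
one has `∑_k a_k ≤ C (A/ε) log (e + B/A)`. -/
theorem log_interpolation_sequence :
    ∃ C : ℝ, 0 < C ∧ ∀ (a : ℤ → ℝ) (ε : ℝ), 0 < ε → ε ≤ 1 →
      (∀ k, 0 ≤ a k) →
      BddAbove (Set.range a) →
      BddAbove (Set.range fun k : ℤ => (2:ℝ) ^ (-(ε * (k:ℝ))) * a k) →
      BddAbove (Set.range fun k : ℤ => (2:ℝ) ^ (ε * (k:ℝ)) * a k) →
      0 < (⨆ k : ℤ, a k) →
      Summable a ∧
        ∑' k : ℤ, a k ≤ C * ((⨆ k : ℤ, a k) / ε) *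
          Real.log (Real.exp 1 +
            ((⨆ k : ℤ, (2:ℝ) ^ (-(ε * (k:ℝ))) * a k) +
              (⨆ k : ℤ, (2:ℝ) ^ (ε * (k:ℝ)) * a k)) / (⨆ k : ℤ, a k)) := by
  refine ⟨16, by norm_num, fun a ε hε₀ hε₁ ha hA_bdd hB₁_bdd hB₂_bdd hA => ?_⟩
  set A := ⨆ k : ℤ, a k
  set B := (⨆ k : ℤ, (2:ℝ) ^ (-(ε * (k:ℝ))) * a k) + ⨆ k : ℤ, (2:ℝ) ^ (ε * (k:ℝ)) * a k
  set M := log (exp 1 + B / A)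
  set D := ε * log 2
  have hD : 0 < D := by positivity
  have hr : (2:ℝ) ^ (-ε) = exp (-D) := by rw [rpow_def_of_pos two_pos, mul_neg, mul_comm]
  have hr₁ : exp (-D) < 1 := exp_lt_one_iff.mpr (neg_lt_zero.mpr hD)
  have hpoint : ∀ k, a k ≤ B * exp (-D) ^ k.natAbs := fun k =>
    hr ▸ le_mul_two_rpow_neg_pow_natAbs (ha k) (le_ciSup hB₁_bdd k) (le_ciSup hB₂_bdd k)
  have hB : 0 ≤ B := by simpa using (ha 0).trans (hpoint 0)
  have hM : 1 ≤ M := by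
    rw [← log_exp 1]
    exact log_le_log (exp_pos 1) (le_add_of_nonneg_right (by positivity))
  set N := ⌈M / D⌉₊
  have hN : (N : ℝ) < M / D + 1 := Nat.ceil_lt_add_one (div_nonneg (by linarith) hD.le)
  refine ⟨summable_int_of_le_geometric_natAbs ha hpoint (exp_pos _).le hr₁, ?_⟩
  calc ∑' k, a k ≤ 2 * ((N + 1) * A + B * exp (-D) ^ (N + 1) / (1 - exp (-D))) :=
        tsum_int_le_of_le_of_le_geometric_natAbs ha (le_ciSup hA_bdd) hpoint (exp_pos _).le hr₁ N
    _ ≤ 2 * ((M / D + 2) * A + A / D) := by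
        gcongr 2 * (?_ * A + ?_)
        · linarith
        · exact mul_exp_neg_pow_ceil_div_one_sub_le hA hB hD
    _ ≤ 16 * (A / ε) * M := split_bound_le_sixteen_mul_div hA hε₀ hε₁ hM
end
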